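/- For every N₀ ∈ ℕ, the intersection, taken over all N ≤ N₀ and all Hermitian matrices a₁, a₂ ∈ M_N(ℂ), of the kernels of the linear maps Tr ∘ ev_{a₁,a₂} : ℂ⟨x₁,x₂⟩ → ℂ, strictly contains the commutator subspace 𝓘; that is, there exists y ∈ ℂ⟨x₁,x₂⟩ with y ∉ 𝓘 such that Tr(ev_{a₁,a₂}(y)) = 0 for all N ≤ N₀ and all Hermitian a₁, a₂ ∈ M_N(ℂ). -/

import Mathlib

/-!
The standard polynomial `s_n(v₁, …, v_n) = ∑_σ sign σ · v_{σ 1} ⋯ v_{σ n}` is alternating and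
multilinear, so it vanishes identically on any algebra of dimension `< n`, in particular on
`M_N(ℂ)` when `N² < n`. Hence `y = x₁x₂ · s_n(v₁, …, v_n)` evaluates to `0` at every pair of
`N × N` matrices, whatever the words `v_i`, and it remains to choose them so that `y ∉ 𝓘`.
Since `Tr ∘ ev` kills `𝓘`, one evaluation with nonzero trace suffices: at the cyclic shift `C`
and the matrix unit `E₀₀` of size `n + 1`, the words `v_i = x₁^{n+1-i} x₂ x₁^{i+1}` become
`E_{i,i+1}` and `x₁x₂` becomes `E_{n,0}`; in `s_n(E₀₁, …, E_{n-1,n})` only the identity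
permutation contributes to the `(0, n)` entry, so the trace is `1`.
-/

noncomputable section

abbrev FreeCAlg : Type := MonoidAlgebra ℂ (FreeMonoid (Fin 2))

/-- The commutator subspace 𝓘. -/
def commutatorSubspace : Submodule ℂ FreeCAlg :=
  Submodule.span ℂ {y : FreeCAlg | ∃ P Q : FreeCAlg, y = P * Q - Q * P}

/-- The evaluation homomorphism ev_{a₁,a₂} : ℂ⟨x₁,x₂⟩ → M_N(ℂ), x₁ ↦ a₁, x₂ ↦ a₂. -/
def evMat {N : ℕ} (a₁ a₂ : Matrix (Fin N) (Fin N) ℂ) :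
    FreeCAlg →ₐ[ℂ] Matrix (Fin N) (Fin N) ℂ :=
  MonoidAlgebra.lift ℂ (Matrix (Fin N) (Fin N) ℂ) (FreeMonoid (Fin 2))
    (FreeMonoid.lift (fun i => if i = 0 then a₁ else a₂))

open Matrix

section StandardPolynomial

variable (R A : Type*) [CommRing R] [Ring A] [Algebra R A] (n : ℕ)

def standardPoly : A [⋀^Fin n]→ₗ[R] A :=
  MultilinearMap.alternatization (MultilinearMap.mkPiAlgebraFin R n A)

variable {R A n}

theorem standardPoly_apply (v : Fin n → A) :
    standardPoly R A n v =
      ∑ σ : Equiv.Perm (Fin n), Equiv.Perm.sign σ • (List.ofFn (v ∘ σ)).prod :=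
  MultilinearMap.alternatization_apply _ v

theorem AlgHom.map_standardPoly {B : Type*} [Ring B] [Algebra R B] (f : A →ₐ[R] B)
    (v : Fin n → A) : f (standardPoly R A n v) = standardPoly R B n (f ∘ v) := by
  simp only [standardPoly_apply, map_sum, Units.smul_def, map_zsmul, map_list_prod,
    List.map_ofFn]
  rfl

theorem standardPoly_eq_zero_of_finrank_lt {K : Type*} [Field K] [Algebra K A]
    [FiniteDimensional K A] (h : Module.finrank K A < n) (v : Fin n → A) :
    standardPoly K A n v = 0 :=
  AlternatingMap.map_linearDependent _ v fun hv => by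
    simpa using (hv.fintype_card_le_finrank.trans_lt h).ne

end StandardPolynomial

section MatrixUnits

variable {R : Type*} [Semiring R]

theorem prod_single_castSucc_succ_apply_last {m : ℕ} :
    ∀ {k : ℕ} (f : Fin k → Fin m) (p : Fin (m + 1)),
      (List.ofFn fun i => single (f i).castSucc (f i).succ (1 : R)).prod p (Fin.last m) =
        if (∀ i, (f i : ℕ) = p + i) ∧ (p : ℕ) + k = m then 1 else 0
  | 0, f, p => by simp [one_apply, Fin.ext_iff, eq_comm]
  | k + 1, f, p => by
    rw [List.ofFn_succ, List.prod_cons]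
    by_cases hp : p = (f 0).castSucc
    · subst hp
      rw [single_mul_apply_same, one_mul, prod_single_castSucc_succ_apply_last]
      simp only [Fin.val_succ, Fin.val_castSucc]
      refine if_congr ⟨fun ⟨hf, hk⟩ => ⟨fun i => ?_, by omega⟩,
        fun ⟨hf, hk⟩ =>
          ⟨fun i => by simpa [add_assoc, add_comm 1] using hf i.succ, by omega⟩⟩
        rfl rfl
      cases i using Fin.cases with
      | zero => rfl
      | succ i => simpa [add_assoc, add_comm 1] using hf i
    · rw [single_mul_apply_of_ne _ _ _ _ _ hp, if_neg]
      exact fun h => hp (Fin.ext (by simpa using (h.1 0).symm))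

theorem prod_single_perm_apply_zero_last {n : ℕ} (σ : Equiv.Perm (Fin n)) :
    (List.ofFn fun i => single (σ i).castSucc (σ i).succ (1 : R)).prod 0 (Fin.last n) =
      if σ = 1 then 1 else 0 := by
  rw [prod_single_castSucc_succ_apply_last]
  simp only [Fin.val_zero, zero_add, and_true, Equiv.ext_iff, Fin.ext_iff]
  rfl

end MatrixUnits

theorem standardPoly_single_castSucc_succ_apply_zero_last {R : Type*} [CommRing R] (n : ℕ) :
    standardPoly R (Matrix (Fin (n + 1)) (Fin (n + 1)) R) n
      (fun i => single i.castSucc i.succ 1) 0 (Fin.last n) = 1 := by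
  simp only [standardPoly_apply, Matrix.sum_apply, Units.smul_def, Matrix.smul_apply,
    Function.comp_def, prod_single_perm_apply_zero_last]
  simp

section CyclicShift

variable {R : Type*} [Semiring R] {n : ℕ}

open Fin.NatCast

variable (R n) in
def cyclicShift : Matrix (Fin (n + 1)) (Fin (n + 1)) R :=
  of fun i j => if j = i + 1 then 1 else 0

theorem cyclicShift_mul_single (i j : Fin (n + 1)) (c : R) :
    cyclicShift R n * single i j c = single (i - 1) j c := by
  ext p q
  by_cases hq : j = q <;> simp [cyclicShift, mul_apply, single, sub_eq_iff_eq_add, hq]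

theorem single_mul_cyclicShift (i j : Fin (n + 1)) (c : R) :
    single i j c * cyclicShift R n = single i (j + 1) c := by
  ext p q
  simp [cyclicShift, mul_apply, single, ite_and, ← sub_eq_iff_eq_add, eq_sub_iff_add_eq]

theorem cyclicShift_pow_mul_single_mul_pow (a b : ℕ) :
    cyclicShift R n ^ a * single 0 0 1 * cyclicShift R n ^ b =
      single (-a : Fin (n + 1)) (b : Fin (n + 1)) 1 := by
  induction b with
  | zero =>
    induction a with
    | zero => simp
    | succ a ih =>
      rw [pow_zero, mul_one] at ih ⊢
      rw [pow_succ', mul_assoc, ih, cyclicShift_mul_single, Nat.cast_succ, neg_add',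
        Nat.cast_zero]
  | succ b ih => rw [pow_succ, ← mul_assoc, ih, single_mul_cyclicShift, Nat.cast_succ]

end CyclicShift

namespace FreeCAlg

open Fin.NatCast

def X (i : Fin 2) : FreeCAlg := MonoidAlgebra.of ℂ (FreeMonoid (Fin 2)) (FreeMonoid.of i)

variable {N : ℕ} (a₁ a₂ : Matrix (Fin N) (Fin N) ℂ)

@[simp]
theorem evMat_X_zero : evMat a₁ a₂ (X 0) = a₁ := by
  simp [evMat, X]

@[simp]
theorem evMat_X_one : evMat a₁ a₂ (X 1) = a₂ := by
  simp [evMat, X]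

theorem trace_evMat_eq_zero_of_mem_commutatorSubspace {z : FreeCAlg}
    (hz : z ∈ commutatorSubspace) : trace (evMat a₁ a₂ z) = 0 := by
  induction hz using Submodule.span_induction with
  | mem w hw =>
    obtain ⟨P, Q, rfl⟩ := hw
    rw [map_sub, map_mul, map_mul, trace_sub, trace_mul_comm, sub_self]
  | zero => simp
  | add w₁ w₂ _ _ h₁ h₂ => rw [map_add, trace_add, h₁, h₂, add_zero]
  | smul c w _ h => rw [map_smul, trace_smul, h, smul_zero]

def superdiagWord (n : ℕ) (i : Fin n) : FreeCAlg :=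
  X 0 ^ (n + 1 - i : ℕ) * X 1 * X 0 ^ (i + 1 : ℕ)

def standardPolyWitness (n : ℕ) : FreeCAlg :=
  X 0 * X 1 * standardPoly ℂ FreeCAlg n (superdiagWord n)

theorem evMat_standardPolyWitness_eq_zero {n : ℕ} (hn : N * N < n) :
    evMat a₁ a₂ (standardPolyWitness n) = 0 := by
  rw [standardPolyWitness, map_mul, AlgHom.map_standardPoly,
    standardPoly_eq_zero_of_finrank_lt (by simpa [Module.finrank_matrix] using hn), mul_zero]

theorem evMat_superdiagWord (n : ℕ) (i : Fin n) :
    evMat (cyclicShift ℂ n) (single 0 0 1) (superdiagWord n i) =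
      single i.castSucc i.succ 1 := by
  have hneg : -((n + 1 - i : ℕ) : Fin (n + 1)) = i.castSucc := by
    rw [neg_eq_iff_add_eq_zero, ← Fin.coe_eq_castSucc, ← Nat.cast_add,
      Nat.sub_add_cancel i.2.le.step, Fin.natCast_self]
  rw [superdiagWord, map_mul, map_mul, map_pow, map_pow, evMat_X_zero, evMat_X_one,
    cyclicShift_pow_mul_single_mul_pow, hneg, Nat.cast_succ, Fin.coe_eq_castSucc,
    Fin.coeSucc_eq_succ]

theorem trace_evMat_standardPolyWitness (n : ℕ) :
    trace (evMat (cyclicShift ℂ n) (single 0 0 1) (standardPolyWitness n)) = 1 := by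
  rw [standardPolyWitness, map_mul, map_mul, evMat_X_zero, evMat_X_one, cyclicShift_mul_single,
    zero_sub, trace_single_mul, AlgHom.map_standardPoly, Function.comp_def]
  simp only [evMat_superdiagWord, neg_eq_of_add_eq_zero_left (Fin.last_add_one n), one_smul]
  exact standardPoly_single_castSucc_succ_apply_zero_last n

theorem standardPolyWitness_notMem_commutatorSubspace (n : ℕ) :
    standardPolyWitness n ∉ commutatorSubspace := fun h => by
  simpa [trace_evMat_standardPolyWitness] using
    trace_evMat_eq_zero_of_mem_commutatorSubspace (cyclicShift ℂ n) (single 0 0 1) h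

end FreeCAlg

theorem exists_notMem_commutator_killed_by_all_small_traces (N₀ : ℕ) :
    ∃ y : FreeCAlg, y ∉ commutatorSubspace ∧
      ∀ N : ℕ, N ≤ N₀ → ∀ a₁ a₂ : Matrix (Fin N) (Fin N) ℂ,
        a₁.IsHermitian → a₂.IsHermitian →
        Matrix.trace (evMat a₁ a₂ y) = 0 := by
  refine ⟨FreeCAlg.standardPolyWitness (N₀ * N₀ + 1),
    FreeCAlg.standardPolyWitness_notMem_commutatorSubspace _, fun N hN a₁ a₂ _ _ => ?_⟩
  have hsmall : N * N < N₀ * N₀ + 1 := Nat.lt_succ_of_le (Nat.mul_le_mul hN hN)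
  rw [FreeCAlg.evMat_standardPolyWitness_eq_zero a₁ a₂ hsmall, trace_zero]

end
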